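/- (Covariance structure underlying Theorem 4.) Let A be a real m × R matrix, C a real symmetric positive semidefinite m × m matrix, D := (A, ι_m), and let v* minimize v ↦ vᵀCv over V := {v : Aᵀv = 0, ιᵀv = 1}. Let u₁*, …, u_q* ∈ ℝ^m satisfy, with U* the m × q matrix with these columns: U*ᵀA = 0, U*ᵀι_m = 0, and U*ᵀC U* = (v*ᵀCv*)·I_q. Then U*ᵀCv* = 0, and consequently the (q+1) × (q+1) matrix with block form [[v*ᵀCv*, v*ᵀC U*],[U*ᵀCv*, U*ᵀC U*]] equals (v*ᵀCv*)·I_{q+1}. -/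

import Mathlib

open Matrix

/-!
Moving the minimizer `v*` along a column `u` of `U*` stays inside `V`, because `u` is orthogonal to
the columns of `A` and to `ι`. Along that line the objective is the quadratic
`t ↦ (uᵀCu) t² + 2 (uᵀCv*) t + v*ᵀCv*`, minimal at `t = 0`, so its linear coefficient `uᵀCv*`
vanishes. With `U*ᵀCU* = (v*ᵀCv*) I_q` this makes the block matrix a multiple of the identity.
-/

theorem eq_zero_of_forall_nonneg_mul_add_mul {K : Type*} [Field K] [LinearOrder K]
    [IsStrictOrderedRing K] {a b : K} (h : ∀ t : K, 0 ≤ a * (t * t) + b * t) : b = 0 := by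
  have hdiscrim : discrim a b 0 ≤ 0 := discrim_le_zero fun t => by simpa using h t
  rw [discrim, mul_zero, sub_zero] at hdiscrim
  exact pow_eq_zero_iff two_ne_zero |>.mp (le_antisymm hdiscrim (sq_nonneg b))

namespace Matrix

variable {n : Type*} [Fintype n]

theorem IsSymm.dotProduct_mulVec_comm {R : Type*} [CommSemiring R] {C : Matrix n n R}
    (hC : C.IsSymm) (v w : n → R) : v ⬝ᵥ C *ᵥ w = w ⬝ᵥ C *ᵥ v := by
  rw [dotProduct_mulVec, ← mulVec_transpose, hC.eq, dotProduct_comm]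

theorem IsSymm.dotProduct_mulVec_add_smul {R : Type*} [CommRing R] {C : Matrix n n R}
    (hC : C.IsSymm) (v u : n → R) (t : R) :
    (v + t • u) ⬝ᵥ C *ᵥ (v + t • u) =
      (u ⬝ᵥ C *ᵥ u) * (t * t) + 2 * (u ⬝ᵥ C *ᵥ v) * t + v ⬝ᵥ C *ᵥ v := by
  simp only [mulVec_add, mulVec_smul, dotProduct_add, add_dotProduct, dotProduct_smul,
    smul_dotProduct, smul_eq_mul, hC.dotProduct_mulVec_comm v u]
  ring

theorem IsSymm.dotProduct_mulVec_eq_zero_of_le_add_smul {K : Type*} [Field K] [LinearOrder K]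
    [IsStrictOrderedRing K] {C : Matrix n n K} (hC : C.IsSymm) {v u : n → K}
    (hmin : ∀ t : K, v ⬝ᵥ C *ᵥ v ≤ (v + t • u) ⬝ᵥ C *ᵥ (v + t • u)) :
    u ⬝ᵥ C *ᵥ v = 0 := by
  have h2 : 2 * (u ⬝ᵥ C *ᵥ v) = 0 :=
    eq_zero_of_forall_nonneg_mul_add_mul (a := u ⬝ᵥ C *ᵥ u) fun t => by
      have := hmin t
      rw [hC.dotProduct_mulVec_add_smul] at this
      linarith
  exact (mul_eq_zero.mp h2).resolve_left two_ne_zero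

end Matrix

/-- Covariance structure underlying Theorem 4: if the columns of `U*` satisfy
`U*ᵀA = 0`, `U*ᵀι = 0`, `U*ᵀCU* = (v*ᵀCv*)·I_q` and `v*` minimizes `vᵀCv` over `V`,
then `U*ᵀCv* = 0` and the `(q+1) × (q+1)` block covariance matrix equals
`(v*ᵀCv*)·I_{q+1}`. -/
theorem stmt_4 (m R q : ℕ)
    (A : Matrix (Fin m) (Fin R) ℝ)
    (C : Matrix (Fin m) (Fin m) ℝ) (hC : C.PosSemidef)
    (v : Fin m → ℝ)
    (hfeas : Aᵀ.mulVec v = 0 ∧ (fun _ => (1 : ℝ)) ⬝ᵥ v = 1)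
    (hmin : ∀ w : Fin m → ℝ, Aᵀ.mulVec w = 0 → (fun _ => (1 : ℝ)) ⬝ᵥ w = 1 →
      v ⬝ᵥ C.mulVec v ≤ w ⬝ᵥ C.mulVec w)
    (U : Matrix (Fin m) (Fin q) ℝ)
    (hUA : Uᵀ * A = 0)
    (hUι : Uᵀ.mulVec (fun _ => (1 : ℝ)) = 0)
    (hUCU : Uᵀ * C * U = (v ⬝ᵥ C.mulVec v) • (1 : Matrix (Fin q) (Fin q) ℝ)) :
    Uᵀ.mulVec (C.mulVec v) = 0 ∧
    Matrix.fromBlocks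
      (Matrix.of fun (_ : Fin 1) (_ : Fin 1) => v ⬝ᵥ C.mulVec v)
      (Matrix.of fun (_ : Fin 1) (j : Fin q) => v ⬝ᵥ C.mulVec (fun i => U i j))
      (Matrix.of fun (j : Fin q) (_ : Fin 1) => (fun i => U i j) ⬝ᵥ C.mulVec v)
      (Uᵀ * C * U)
      = (v ⬝ᵥ C.mulVec v) • (1 : Matrix (Fin 1 ⊕ Fin q) (Fin 1 ⊕ Fin q) ℝ) := by
  obtain ⟨hAv, hιv⟩ := hfeas
  have hCsymm : C.IsSymm := isHermitian_iff_isSymm.mp hC.isHermitian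
  have hAU : ∀ j, Aᵀ *ᵥ Uᵀ j = 0 := fun j => by
    rw [mulVec_transpose, ← mul_apply_eq_vecMul, hUA]
    rfl
  have hιU : ∀ j, (fun _ => (1 : ℝ)) ⬝ᵥ Uᵀ j = 0 := fun j => by
    rw [dotProduct_comm]
    exact congrFun hUι j
  have horth : ∀ j, Uᵀ j ⬝ᵥ C *ᵥ v = 0 := fun j =>
    hCsymm.dotProduct_mulVec_eq_zero_of_le_add_smul fun t =>
      hmin _ (by rw [mulVec_add, mulVec_smul, hAv, hAU, smul_zero, add_zero])
        (by rw [dotProduct_add, dotProduct_smul, hιv, hιU, smul_zero, add_zero])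
  refine ⟨funext horth, ?_⟩
  rw [← fromBlocks_one, fromBlocks_smul, smul_zero, smul_zero, hUCU]
  congr 1
  · ext i j
    simp [Subsingleton.elim i j]
  · ext i j
    rw [of_apply, hCsymm.dotProduct_mulVec_comm]
    exact horth j
  · ext i j
    exact horth i
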